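/- arXiv:2011.08281 — 2 statements merged into one kernel-verified Lean document; each statement's English description precedes it below -/
import Mathlib

section
/- Let à be an m×n real matrix, (B_h)_{h≥1} a sequence of b×m real matrices, (c_h)_{h≥1} a sequence of real step sizes, and let sig denote entrywise application of the logistic sigmoid sig(t) = 1/(1 + exp(−t)). Define the SGD iterates by x_h = x_{h−1} − c_h Ãᵀ B_hᵀ sig(B_h à x_{h−1}). Then for every base index t ≥ 0 and every j ≥ 1, the sampled matrix–vector product satisfies the unrolled identity B_{t+j} à x_{t+j−1} = B_{t+j} à x_t − Σ_{i=1}^{j−1} c_{t+i} (B_{t+j} à Ãᵀ B_{t+i}ᵀ) sig(B_{t+i} à x_{t+i−1}); that is, each sampled product can be recovered from the single product B_{t+j} à x_t and the Gram blocks B_{t+j} à Ãᵀ B_{t+i}ᵀ, without forming the intermediate iterates x_{t+1}, ..., x_{t+j−1}. -/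
noncomputable def sig (t : ℝ) : ℝ := 1 / (1 + Real.exp (-t))

open Finset Matrix

theorem eq_sub_sum_Icc_of_eq_sub {G : Type*} [AddCommGroup G] {x d : ℕ → G}
    (hx : ∀ h, 1 ≤ h → x h = x (h - 1) - d h) (t j : ℕ) :
    x (t + j) = x t - ∑ i ∈ Icc 1 j, d (t + i) := by
  induction j with
  | zero => simp
  | succ j ih =>
    rw [← add_assoc, hx _ (Nat.le_add_left 1 _), Nat.add_sub_cancel, ih,
      sum_Icc_succ_top (Nat.le_add_left 1 j), add_assoc, sub_sub]

/-- Unrolling the SGD recurrence for logistic regression: the sampled product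
`B_{t+j} Ã x_{t+j−1}` can be recovered from `B_{t+j} Ã x_t` and the Gram
blocks `B_{t+j} Ã Ãᵀ B_{t+i}ᵀ`, without forming the intermediate iterates. -/
theorem sgd_unrolled_sampled_product (m n b : ℕ)
    (Atil : Matrix (Fin m) (Fin n) ℝ)
    (B : ℕ → Matrix (Fin b) (Fin m) ℝ) (c : ℕ → ℝ) (x : ℕ → Fin n → ℝ)
    (hrec : ∀ h : ℕ, 1 ≤ h →
      x h = x (h - 1) -
        c h • Atil.transpose.mulVec ((B h).transpose.mulVec
          (fun k => sig ((B h * Atil).mulVec (x (h - 1)) k)))) :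
    ∀ (t : ℕ) (j : ℕ), 1 ≤ j →
      (B (t + j) * Atil).mulVec (x (t + j - 1)) =
        (B (t + j) * Atil).mulVec (x t) -
          ∑ i ∈ Finset.Icc 1 (j - 1),
            c (t + i) •
              (B (t + j) * Atil * Atil.transpose * (B (t + i)).transpose).mulVec
                (fun k => sig ((B (t + i) * Atil).mulVec (x (t + i - 1)) k)) := by
  intro t j hj
  obtain ⟨j, rfl⟩ := Nat.exists_eq_add_of_le' hj
  rw [Nat.add_sub_cancel, ← add_assoc, Nat.add_sub_cancel,
    eq_sub_sum_Icc_of_eq_sub hrec t j, mulVec_sub, mulVec_sum]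
  simp only [mulVec_smul, mulVec_mulVec, Matrix.mul_assoc]
end

section
/- Let à be an m×n real matrix, B_1, ..., B_s be b×m real matrices, c_1, ..., c_s real step sizes, x_0 an n-dimensional vector, and let sig denote entrywise application of the logistic sigmoid sig(t) = 1/(1 + exp(−t)). Define the CA-SGD quantities: q_j = B_j à x_0 − Σ_{i=1}^{j−1} c_i (B_j à Ãᵀ B_iᵀ) g_i and g_j = sig(q_j) for j = 1, ..., s (so g_1 = sig(B_1 à x_0)), and set y = x_0 − Σ_{j=1}^{s} c_j Ãᵀ B_jᵀ g_j. Also define the SGD iterates x_j = x_{j−1} − c_j Ãᵀ B_jᵀ sig(B_j à x_{j−1}) for j = 1, ..., s. Then g_j = sig(B_j à x_{j−1}) for every j, and y = x_s; that is, the CA-SGD recurrence computed from the initial products B_j à x_0 and the Gram blocks B_j à Ãᵀ B_iᵀ produces exactly the same result as s consecutive SGD iterations. -/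
/-!
By induction on `j`, the SGD iterate `x_j` is `x₀ - ∑_{i ≤ j} c_i Ãᵀ B_iᵀ g_i`. Multiplying this
unrolled form by `B_{j+1} Ã` and pushing the product through the sum turns `B_{j+1} Ã x_j` into
`B_{j+1} Ã x₀ - ∑_{i ≤ j} c_i (B_{j+1} Ã Ãᵀ B_iᵀ) g_i = q_{j+1}`, so the gradient CA-SGD uses at
step `j + 1` is the one SGD uses, which in turn continues the induction.
-/

open Matrix

theorem Matrix.mulVec_sub_sum_smul_mulVec_transpose {R ι k l m n : Type*} [CommRing R]
    [Fintype l] [Fintype m] [Fintype n] (M : Matrix k n R) (A : Matrix m n R)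
    (B : ι → Matrix l m R) (c : ι → R) (g : ι → l → R) (x₀ : n → R) (t : Finset ι) :
    M *ᵥ (x₀ - ∑ i ∈ t, c i • Aᵀ *ᵥ ((B i)ᵀ *ᵥ g i)) =
      M *ᵥ x₀ - ∑ i ∈ t, c i • (M * Aᵀ * (B i)ᵀ) *ᵥ g i := by
  simp only [mulVec_sub, mulVec_sum, mulVec_smul, mulVec_mulVec, Matrix.mul_assoc]

/-- Correctness of CA-SGD: the quantities `q_j`, `g_j` computed from the
initial products `B_j Ã x₀` and the Gram blocks `B_j Ã Ãᵀ B_iᵀ` satisfy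
`g_j = sig(B_j Ã x_{j−1})`, and the CA-SGD output `y` equals the result `x_s`
of `s` consecutive SGD iterations. -/
theorem casgd_correct (m n b s : ℕ)
    (Atil : Matrix (Fin m) (Fin n) ℝ)
    (B : ℕ → Matrix (Fin b) (Fin m) ℝ) (c : ℕ → ℝ)
    (x0 : Fin n → ℝ) (q g : ℕ → Fin b → ℝ) (y : Fin n → ℝ) (x : ℕ → Fin n → ℝ)
    (hq : ∀ j : ℕ, 1 ≤ j → j ≤ s →
      q j = (B j * Atil).mulVec x0 -
        ∑ i ∈ Finset.Icc 1 (j - 1),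
          c i • (B j * Atil * Atil.transpose * (B i).transpose).mulVec (g i))
    (hg : ∀ j : ℕ, 1 ≤ j → j ≤ s → g j = fun k => sig (q j k))
    (hy : y = x0 - ∑ j ∈ Finset.Icc 1 s,
      c j • Atil.transpose.mulVec ((B j).transpose.mulVec (g j)))
    (hx0 : x 0 = x0)
    (hx : ∀ j : ℕ, 1 ≤ j → j ≤ s →
      x j = x (j - 1) -
        c j • Atil.transpose.mulVec ((B j).transpose.mulVec
          (fun k => sig ((B j * Atil).mulVec (x (j - 1)) k)))) :
    (∀ j : ℕ, 1 ≤ j → j ≤ s →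
      g j = fun k => sig ((B j * Atil).mulVec (x (j - 1)) k)) ∧ y = x s := by
  have hg_of_unrolled : ∀ j, 1 ≤ j → j ≤ s →
      x (j - 1) = x0 - ∑ i ∈ Finset.Icc 1 (j - 1), c i • Atilᵀ *ᵥ ((B i)ᵀ *ᵥ g i) →
      g j = fun k => sig (((B j * Atil) *ᵥ x (j - 1)) k) := by
    intro j h1 hjs hxj
    rw [hg j h1 hjs, hq j h1 hjs, hxj, mulVec_sub_sum_smul_mulVec_transpose]
  have unrolled : ∀ j ≤ s,
      x j = x0 - ∑ i ∈ Finset.Icc 1 j, c i • Atilᵀ *ᵥ ((B i)ᵀ *ᵥ g i) := by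
    intro j
    induction j with
    | zero => intro _; simp [hx0]
    | succ j ih =>
      intro hjs
      have hxj := ih (by omega)
      have hgj := hg_of_unrolled (j + 1) (by omega) hjs hxj
      rw [Nat.add_sub_cancel] at hgj
      rw [hx (j + 1) (by omega) hjs, Nat.add_sub_cancel, ← hgj, hxj,
        Finset.sum_Icc_succ_top (by omega)]
      abel
  exact ⟨fun j h1 hjs => hg_of_unrolled j h1 hjs (unrolled (j - 1) (by omega)),
    by rw [hy, unrolled s le_rfl]⟩
end
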